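/- Let L : Ω → (−∞,0) be a C² function on an open convex cone Ω ⊆ ℝⁿ, positively 2-homogeneous, with Hessian of signature (−,+,…,+) at every point of Ω. For q ∈ (0,1) define L_q(v) = −(1/q)·(−2L(v))^{q/2} on Ω. Then L_q is strictly convex on Ω. -/

import Mathlib

/-!
Along a segment `γ t = p + t w` of the cone, the second derivative of `L_q ∘ γ` is
`(-2L)^(q/2-2) * ((2-q) (DL w)² - 2L · D²L(w, w))`. Euler's relations for the 2-homogeneous `L`
give `D²L(p, p) = 2L(p)` and `D²L(p, w) = DL(p) w`, so the bracket is
`(2-q) H(p,w)² - H(p,p) H(w,w)` for the Lorentzian Hessian `H`, with `p` timelike. The reverse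
Cauchy–Schwarz inequality `H(p,p) H(w,w) ≤ H(p,w)²` holds for timelike `p`, with equality only
for `w ∥ p`, where `H(p,w) ≠ 0`; since `2 - q > 1`, the bracket is positive for `w ≠ 0`.
-/

open Matrix

def minkowskiForm (n : ℕ) [NeZero n] : LinearMap.BilinForm ℝ (Fin n → ℝ) :=
  toBilin' (diagonal fun j => if j = 0 then -1 else 1)

namespace minkowskiForm

variable {n : ℕ} [NeZero n]

theorem apply (x y : Fin n → ℝ) :
    minkowskiForm n x y = ∑ j, (if j = 0 then -1 else 1) * x j * y j := by
  simp [minkowskiForm, toBilin'_apply', dotProduct, mulVec_diagonal]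

theorem comm (x y : Fin n → ℝ) : minkowskiForm n x y = minkowskiForm n y x := by
  simp only [apply]
  exact Finset.sum_congr rfl fun j _ => by ring

theorem self_pos_of_apply_zero {z : Fin n → ℝ} (h0 : z 0 = 0) (hz : z ≠ 0) :
    0 < minkowskiForm n z z := by
  have hterm : ∀ j, 0 ≤ (if j = 0 then -1 else 1) * z j * z j := fun j => by
    split_ifs with hj
    · simp [hj, h0]
    · simpa using mul_self_nonneg (z j)
  obtain ⟨j, hj⟩ := Function.ne_iff.1 hz
  have hj0 : j ≠ 0 := by rintro rfl; exact hj h0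
  rw [apply]
  refine Finset.sum_pos' (fun j _ => hterm j) ⟨j, Finset.mem_univ j, ?_⟩
  simpa [hj0] using mul_self_pos.2 hj

theorem self_mul_self_lt_mul_sq {x y : Fin n → ℝ} (hx : minkowskiForm n x x < 0) (hy : y ≠ 0)
    {c : ℝ} (hc : 1 < c) :
    minkowskiForm n x x * minkowskiForm n y y < c * minkowskiForm n x y ^ 2 := by
  set Q := minkowskiForm n
  have hx0 : x 0 ≠ 0 := by
    intro h0
    have hx' : x ≠ 0 := by rintro rfl; simp at hx
    exact (self_pos_of_apply_zero h0 hx').not_gt hx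
  -- `z` has vanishing time coordinate, so `Q z z ≥ 0`: a quadratic in `t` with `Q x x < 0`.
  set t := -(y 0 / x 0)
  set z := y + t • x
  have hz0 : z 0 = 0 := by simp [z, t, hx0]
  have hQz : Q z z = Q y y + 2 * t * Q x y + t ^ 2 * Q x x := by
    simp only [z, map_add, map_smul, LinearMap.add_apply, LinearMap.smul_apply, smul_eq_mul]
    rw [show Q y x = Q x y from comm y x]
    ring
  have hQxz : Q x z = Q x y + t * Q x x := by simp [z]
  rcases eq_or_ne z 0 with hz | hz
  · have ht : t ≠ 0 := by
      rintro ht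
      simp [z, ht] at hz
      exact hy hz
    simp only [hz, map_zero] at hQxz hQz
    have hxy : Q x y = -t * Q x x := by linarith
    have hyy : Q y y = t ^ 2 * Q x x := by rw [hxy] at hQz; linarith
    have : 0 < t ^ 2 * Q x x ^ 2 := by have := hx.ne; positivity
    rw [hxy, hyy]
    nlinarith
  · nlinarith [sq_nonneg (Q x y + t * Q x x), sq_nonneg (Q x y),
      mul_pos (neg_pos.2 hx) (self_pos_of_apply_zero hz0 hz)]

end minkowskiForm

theorem LinearMap.BilinForm.self_mul_self_lt_mul_sq_of_minkowskiBasis {E : Type*}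
    [AddCommGroup E] [Module ℝ E] {n : ℕ} [NeZero n] (B : LinearMap.BilinForm ℝ E)
    (b : Module.Basis (Fin n) ℝ E)
    (hb : ∀ i j, B (b i) (b j) = diagonal (fun j : Fin n => if j = 0 then -1 else 1) i j)
    {x y : E} (hx : B x x < 0) (hy : y ≠ 0) {c : ℝ} (hc : 1 < c) :
    B x x * B y y < c * B x y ^ 2 := by
  have hB : B = (minkowskiForm n).compl₁₂ b.equivFun.toLinearMap b.equivFun.toLinearMap :=
    LinearMap.ext_basis b b fun i j => by
      simp [hb, minkowskiForm, Finsupp.single_eq_pi_single]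
  rw [hB] at hx ⊢
  exact minkowskiForm.self_mul_self_lt_mul_sq hx (b.equivFun.map_ne_zero_iff.2 hy) hc

section Homogeneous

variable {E F : Type*} [NormedAddCommGroup E] [NormedSpace ℝ E] [NormedAddCommGroup F]
  [NormedSpace ℝ F] {Ω : Set E} {f : E → F} {k : ℕ} {v : E}

theorem fderiv_apply_self_of_homogeneous
    (hhom : ∀ c : ℝ, 0 < c → ∀ v ∈ Ω, f (c • v) = c ^ k • f v) (hv : v ∈ Ω)
    (hf : DifferentiableAt ℝ f v) : fderiv ℝ f v v = (k : ℝ) • f v := by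
  have hray : HasDerivAt (fun c : ℝ => f (c • v)) (fderiv ℝ f v v) 1 := by
    have hsmul : HasDerivAt (fun c : ℝ => c • v) v 1 := by
      simpa using (hasDerivAt_id (1 : ℝ)).smul_const v
    exact hf.hasFDerivAt.comp_hasDerivAt_of_eq 1 hsmul (one_smul ℝ v).symm
  have hpow : HasDerivAt (fun c : ℝ => c ^ k • f v) ((k : ℝ) • f v) 1 := by
    simpa using (hasDerivAt_pow k (1 : ℝ)).smul_const (f v)
  refine hray.unique (hpow.congr_of_eventuallyEq ?_)
  filter_upwards [Ioi_mem_nhds one_pos] with c hc using hhom c hc v hv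

theorem fderiv_smul_of_homogeneous (hΩ : IsOpen Ω)
    (hhom : ∀ c : ℝ, 0 < c → ∀ v ∈ Ω, f (c • v) = c ^ (k + 1) • f v) {c : ℝ} (hc : 0 < c)
    (hv : v ∈ Ω) : fderiv ℝ f (c • v) = c ^ k • fderiv ℝ f v := by
  have h : c • fderiv ℝ f (c • v) = c • c ^ k • fderiv ℝ f v := by
    rw [← fderiv_comp_smul, smul_smul, ← pow_succ', ← Pi.smul_apply (c ^ (k + 1)),
      ← fderiv_const_smul_field]
    refine Filter.EventuallyEq.fderiv_eq ?_
    filter_upwards [hΩ.mem_nhds hv] with u hu using hhom c hc u hu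
  exact smul_right_injective _ hc.ne' h

end Homogeneous

theorem fderiv_clm_apply_const_apply {E F G : Type*} [NormedAddCommGroup E] [NormedSpace ℝ E]
    [NormedAddCommGroup F] [NormedSpace ℝ F] [NormedAddCommGroup G] [NormedSpace ℝ G]
    {f : E → F →L[ℝ] G} {v : E} (hf : DifferentiableAt ℝ f v) (u : F) (u' : E) :
    fderiv ℝ (fun w => f w u) v u' = fderiv ℝ f v u' u := by
  simp [fderiv_clm_apply hf (differentiableAt_const u)]

theorem two_mul_hessian_lt_mul_fderiv_sq {E : Type*} [NormedAddCommGroup E] [NormedSpace ℝ E]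
    {n : ℕ} [NeZero n] {Ω : Set E} (hΩ : IsOpen Ω) {L : E → ℝ}
    (hhom : ∀ c : ℝ, 0 < c → ∀ v ∈ Ω, L (c • v) = c ^ 2 * L v) {v : E} (hv : v ∈ Ω)
    (hL : DifferentiableAt ℝ L v) (hL' : DifferentiableAt ℝ (fderiv ℝ L) v) (hneg : L v < 0)
    (b : Module.Basis (Fin n) ℝ E)
    (hb : ∀ i j, fderiv ℝ (fderiv ℝ L) v (b i) (b j) =
      diagonal (fun j : Fin n => if j = 0 then -1 else 1) i j)
    {w : E} (hw : w ≠ 0) {c : ℝ} (hc : 1 < c) :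
    2 * L v * fderiv ℝ (fderiv ℝ L) v w w < c * fderiv ℝ L v w ^ 2 := by
  set H := fderiv ℝ (fderiv ℝ L) v
  have hHv : H v = fderiv ℝ L v := by
    simpa using fderiv_apply_self_of_homogeneous (k := 1)
      (fun c hc u hu => fderiv_smul_of_homogeneous hΩ hhom hc hu) hv hL'
  have hHvv : H v v = 2 * L v := by
    rw [hHv]
    simpa using fderiv_apply_self_of_homogeneous hhom hv hL
  have := LinearMap.BilinForm.self_mul_self_lt_mul_sq_of_minkowskiBasis H.toLinearMap₁₂ b hb
    (x := v) (y := w) (show H v v < 0 by linarith) hw hc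
  simp only [ContinuousLinearMap.toLinearMap₁₂_apply_apply_apply] at this
  rwa [hHvv, hHv] at this

theorem strictConvexOn_qLagrangian_comp {I : Set ℝ} (hI : IsOpen I) (hIc : Convex ℝ I) {q : ℝ}
    (hq : q ≠ 0) {ℓ ℓ' ℓ'' : ℝ → ℝ} (hneg : ∀ t ∈ I, ℓ t < 0)
    (hℓ : ∀ t ∈ I, HasDerivAt ℓ (ℓ' t) t) (hℓ' : ∀ t ∈ I, HasDerivAt ℓ' (ℓ'' t) t)
    (hpos : ∀ t ∈ I, 2 * ℓ t * ℓ'' t < (2 - q) * ℓ' t ^ 2) :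
    StrictConvexOn ℝ I (fun t => -(1 / q) * (-2 * ℓ t) ^ (q / 2)) := by
  have hbase : ∀ t ∈ I, 0 < -2 * ℓ t := fun t ht => by linarith [hneg t ht]
  have hderiv : ∀ t ∈ I, HasDerivAt (fun t => -(1 / q) * (-2 * ℓ t) ^ (q / 2))
      ((-2 * ℓ t) ^ (q / 2 - 1) * ℓ' t) t := fun t ht => by
    refine ((((hℓ t ht).const_mul (-2)).rpow_const (Or.inl (hbase t ht).ne')).const_mul
      (-(1 / q))).congr_deriv ?_
    field_simp
  have hderiv2 : ∀ t ∈ I, HasDerivAt (fun t => (-2 * ℓ t) ^ (q / 2 - 1) * ℓ' t)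
      ((-2 * ℓ t) ^ (q / 2 - 2) * ((2 - q) * ℓ' t ^ 2 - 2 * ℓ t * ℓ'' t)) t := fun t ht => by
    refine ((((hℓ t ht).const_mul (-2)).rpow_const (Or.inl (hbase t ht).ne')).mul
      (hℓ' t ht)).congr_deriv ?_
    rw [show q / 2 - 1 - 1 = q / 2 - 2 by ring, show q / 2 - 1 = q / 2 - 2 + 1 by ring,
      Real.rpow_add_one (hbase t ht).ne']
    ring
  refine strictConvexOn_of_deriv2_pos hIc
    (fun t ht => (hderiv t ht).continuousAt.continuousWithinAt) fun t ht => ?_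
  rw [hI.interior_eq] at ht
  have hderiv_eq : deriv (fun t => -(1 / q) * (-2 * ℓ t) ^ (q / 2)) =ᶠ[nhds t]
      fun t => (-2 * ℓ t) ^ (q / 2 - 1) * ℓ' t := by
    filter_upwards [hI.mem_nhds ht] with s hs using (hderiv s hs).deriv
  rw [Function.iterate_succ_apply, Function.iterate_one, hderiv_eq.deriv_eq, (hderiv2 t ht).deriv]
  exact mul_pos (Real.rpow_pos_of_pos (hbase t ht) _) (by linarith [hpos t ht])

theorem strictConvexOn_of_comp_lineMap {E : Type*} [AddCommGroup E] [Module ℝ E] {s : Set E}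
    {f : E → ℝ} (hs : Convex ℝ s)
    (h : ∀ x ∈ s, ∀ y ∈ s, x ≠ y →
      StrictConvexOn ℝ (AffineMap.lineMap (k := ℝ) x y ⁻¹' s) (f ∘ AffineMap.lineMap x y)) :
    StrictConvexOn ℝ s f := by
  refine ⟨hs, fun x hx y hy hxy a b ha hb hab => ?_⟩
  obtain rfl : a = 1 - b := eq_sub_of_add_eq hab
  simpa [AffineMap.lineMap_apply_module] using
    (h x hx y hy hxy).2 (x := 0) (y := 1) (by simpa using hx) (by simpa using hy) zero_ne_one
      ha hb hab

theorem qLagrangian_strictConvexOn_general {n : ℕ} [NeZero n]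
    (Ω : Set (Fin n → ℝ)) (hopen : IsOpen Ω) (hconv : Convex ℝ Ω)
    (L : (Fin n → ℝ) → ℝ)
    (hneg : ∀ v ∈ Ω, L v < 0)
    (hhom : ∀ c : ℝ, 0 < c → ∀ v ∈ Ω, L (c • v) = c ^ 2 * L v)
    (hC2 : ContDiffOn ℝ 2 L Ω)
    (hsig : ∀ v ∈ Ω, ∃ b : Module.Basis (Fin n) ℝ (Fin n → ℝ),
      ∀ i j : Fin n,
        (fderiv ℝ (fun w => fderiv ℝ L w (b i)) v) (b j) =
          if i = j then (if i = (0 : Fin n) then (-1 : ℝ) else 1) else 0)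
    (q : ℝ) (hq : q ∈ Set.Ioo (0 : ℝ) 1) :
    StrictConvexOn ℝ Ω (fun v => -(1 / q) * (-2 * L v) ^ (q / 2)) := by
  have hL : ∀ v ∈ Ω, DifferentiableAt ℝ L v := fun v hv =>
    (hC2.contDiffAt (hopen.mem_nhds hv)).differentiableAt (by norm_num)
  have hL' : ∀ v ∈ Ω, DifferentiableAt ℝ (fderiv ℝ L) v := fun v hv =>
    ((hC2.contDiffAt (hopen.mem_nhds hv)).fderiv_right (m := 1) le_rfl).differentiableAt
      one_ne_zero
  refine strictConvexOn_of_comp_lineMap hconv fun x hx y hy hxy => ?_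
  refine strictConvexOn_qLagrangian_comp (hopen.preimage AffineMap.lineMap_continuous)
    (hconv.affine_preimage _) hq.1.ne'
    (ℓ'' := fun t => fderiv ℝ (fderiv ℝ L) (AffineMap.lineMap x y t) (y - x) (y - x))
    (fun t ht => hneg _ ht)
    (fun t ht => (hL _ ht).hasFDerivAt.comp_hasDerivAt t AffineMap.hasDerivAt_lineMap)
    (fun t ht => ?_) fun t ht => ?_
  · simpa using ((hL' _ ht).hasFDerivAt.comp_hasDerivAt t
      AffineMap.hasDerivAt_lineMap).clm_apply (hasDerivAt_const t (y - x))
  · obtain ⟨b, hb⟩ := hsig _ ht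
    refine two_mul_hessian_lt_mul_fderiv_sq hopen hhom ht (hL _ ht) (hL' _ ht) (hneg _ ht) b
      (fun i j => ?_) (sub_ne_zero.2 hxy.symm) (by linarith [hq.2])
    rw [← diagonal_transpose, transpose_apply, ← fderiv_clm_apply_const_apply (hL' _ ht)]
    exact hb j i

/-- Strict convexity of the q-Lagrangian `L_q = -(1/q)(-2L)^{q/2}` on the timelike cone,
for a positively 2-homogeneous Lorentz–Finsler Lagrangian `L` with Hessian of
signature `(-,+,…,+)` at every point of the cone. -/
theorem qLagrangian_strictConvexOn {n : ℕ} [NeZero n]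
    (Ω : Set (Fin n → ℝ)) (hopen : IsOpen Ω) (hconv : Convex ℝ Ω)
    (hcone : ∀ c : ℝ, 0 < c → ∀ v ∈ Ω, c • v ∈ Ω)
    (L : (Fin n → ℝ) → ℝ)
    (hneg : ∀ v ∈ Ω, L v < 0)
    (hhom : ∀ c : ℝ, 0 < c → ∀ v ∈ Ω, L (c • v) = c ^ 2 * L v)
    (hC2 : ContDiffOn ℝ 2 L Ω)
    (hsig : ∀ v ∈ Ω, ∃ b : Module.Basis (Fin n) ℝ (Fin n → ℝ),
      ∀ i j : Fin n,
        (fderiv ℝ (fun w => fderiv ℝ L w (b i)) v) (b j) =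
          if i = j then (if i = (0 : Fin n) then (-1 : ℝ) else 1) else 0)
    (q : ℝ) (hq : q ∈ Set.Ioo (0 : ℝ) 1) :
    StrictConvexOn ℝ Ω (fun v => -(1 / q) * (-2 * L v) ^ (q / 2)) :=
  qLagrangian_strictConvexOn_general Ω hopen hconv L hneg hhom hC2 hsig q hq
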